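/- Let a ∈ ℂ be nonzero, let n ∈ ℕ, and let S be a nontrivial finite-dimensional irreducible ñ₊-module with I((t−a)^n)·S = 0. Then the annihilator of S in ñ₊ equals I(t−a). -/

import Mathlib

/- Common framework for formalizing statements from
   "Irreducible modules over affine Kac–Moody algebras which are locally finite
    over the positive part" (Guo–Zhao).

   Conventions:
   * `g` is a finite-dimensional simple complex Lie algebra.
   * The loop algebra `g ⊗ ℂ[t,t⁻¹]` is modelled by the vector space `ℤ →₀ g`
     (`Finsupp.single p x` corresponds to `x ⊗ tᵖ`).
   * The affine algebra `ĝ = g ⊗ ℂ[t,t⁻¹] ⊕ ℂK` is any Lie algebra equipped with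
     an `AffineAlg` structure (a linear equivalence with `(ℤ →₀ g) × ℂ` fixing the
     bracket on generators, where `(0,1)` is the central element `K`).
   * Similarly `t̃g = ĝ ⊕ ℂd` is any Lie algebra with an `AffineAlgD` structure on
     `(ℤ →₀ g) × ℂ × ℂ`, where `(0,1,0) = K` and `(0,0,1) = d`.
   * The current algebra `g ⊗ ℂ[t]` is `Polynomial ℂ ⊗[ℂ] g`, and the positive part
     `ñ₊ = (g ⊗ tℂ[t]) ⊕ (n₊ ⊗ 1)` is any Lie algebra `nt` with an `NtAlg` structure:
     an injective Lie algebra morphism into the current algebra with range `ñ₊`.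
   * Induced modules are specified by structures that pin them down uniquely up to
     isomorphism (`IndModule` via the PBW description `ℂ[d] ⊗ M`, and universal
     properties for induction from `ñ₊`).
-/

open scoped TensorProduct
open Polynomial

noncomputable section

namespace AffinePaper

attribute [local instance 100] LieRing.ofAssociativeRing

variable (g : Type) [LieRing g] [LieAlgebra ℂ g]

/-- The current algebra `g ⊗ ℂ[t]` is a complex Lie algebra. -/
instance : LieAlgebra ℂ (Polynomial ℂ ⊗[ℂ] g) where
  lie_smul c x y := by
    rw [← algebraMap_smul (Polynomial ℂ) c y, ← algebraMap_smul (Polynomial ℂ) c ⁅x, y⁆]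
    exact lie_smul (algebraMap ℂ (Polynomial ℂ) c) x y

/-- The weight space of `ad H` on `g` for a functional `α` on a subalgebra `H`. -/
def wtSpace (H : LieSubalgebra ℂ g) (α : Module.Dual ℂ H) : Submodule ℂ g where
  carrier := {x : g | ∀ h : H, ⁅(h : g), x⁆ = α h • x}
  add_mem' := fun {a b} ha hb h => by rw [lie_add, ha h, hb h, smul_add]
  zero_mem' := fun h => by rw [lie_zero, smul_zero]
  smul_mem' := fun c x hx h => by rw [lie_smul, hx h]; exact smul_comm c (α h) x

/-- `α` is a root of `(g, H)`. -/
def IsRootOf (H : LieSubalgebra ℂ g) (α : Module.Dual ℂ H) : Prop :=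
  α ≠ 0 ∧ wtSpace g H α ≠ ⊥

/-- A triangular decomposition `g = n₋ ⊕ h ⊕ n₊` of `g` relative to a Cartan
subalgebra `H`, given by a positive system `P` of roots. -/
structure TriangularData where
  H : LieSubalgebra ℂ g
  nPos : LieSubalgebra ℂ g
  nNeg : LieSubalgebra ℂ g
  isCartan : H.IsCartanSubalgebra
  P : Set (Module.Dual ℂ H)
  pos_isRoot : ∀ α ∈ P, IsRootOf g H α
  pos_neg : ∀ α, IsRootOf g H α → (α ∈ P ↔ -α ∉ P)
  nPos_eq : nPos.toSubmodule = ⨆ α ∈ P, wtSpace g H α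
  nNeg_eq : nNeg.toSubmodule = ⨆ α ∈ P, wtSpace g H (-α)
  triang : nNeg.toSubmodule ⊔ H.toSubmodule ⊔ nPos.toSubmodule = ⊤

variable {g}

/-- The simple roots of a positive system: the positive roots that are not sums of
two positive roots. -/
def TriangularData.simpleRoots (D : TriangularData g) : Set (Module.Dual ℂ D.H) :=
  {α | α ∈ D.P ∧ ¬∃ β ∈ D.P, ∃ γ ∈ D.P, α = β + γ}

/-- `θ` is the highest root. -/
def TriangularData.IsHighestRoot (D : TriangularData g) (θ : Module.Dual ℂ D.H) : Prop :=
  θ ∈ D.P ∧ ∀ α ∈ D.P, ¬ IsRootOf g D.H (θ + α)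

/-- `lam ∈ h*` is dominant integral: it takes nonnegative integer values on all
coroots (elements `hc = ⁅e, f⁆ ∈ [g_α, g_{-α}]` with `α hc = 2`, `α` positive). -/
def IsDominantIntegral (D : TriangularData g) (lam : Module.Dual ℂ D.H) : Prop :=
  ∀ α ∈ D.P, ∀ (e f : g) (hc : D.H), e ∈ wtSpace g D.H α → f ∈ wtSpace g D.H (-α) →
    ⁅e, f⁆ = (hc : g) → α hc = 2 → ∃ n : ℕ, lam hc = (n : ℂ)

variable (g)

/-- The subspace `I(f) = n₊ ⊗ f ℂ[t] + (h ⊕ n₋) ⊗ t f ℂ[t]` of the current algebra. -/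
def idealI (D : TriangularData g) (f : Polynomial ℂ) : Submodule ℂ (Polynomial ℂ ⊗[ℂ] g) :=
  Submodule.span ℂ
    ({z | ∃ x ∈ D.nPos, ∃ p : Polynomial ℂ, z = (f * p) ⊗ₜ[ℂ] x} ∪
     {z | ∃ x : g, x ∈ D.H.toSubmodule ⊔ D.nNeg.toSubmodule ∧
        ∃ p : Polynomial ℂ, z = (X * f * p) ⊗ₜ[ℂ] x})

/-- The subspace `Σ_{α∈Δ₊∖Π} g_α ⊗ fℂ[t] + Σ_{α∈Π} g_α ⊗ tfℂ[t] +
Σ_{α∈Δ₊∖{θ}} g_{−α} ⊗ tfℂ[t] + g_{−θ} ⊗ t²fℂ[t] + h ⊗ tfℂ[t]` of the current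
algebra (`θ` the highest root); for `f = 1` this is the subspace `K` of Lemma 4.2. -/
def bigK (D : TriangularData g) (θ : Module.Dual ℂ D.H) (f : Polynomial ℂ) :
    Submodule ℂ (Polynomial ℂ ⊗[ℂ] g) :=
  Submodule.span ℂ
    ({z | ∃ α ∈ D.P, α ∉ D.simpleRoots ∧
        ∃ x ∈ wtSpace g D.H α, ∃ p : Polynomial ℂ, z = (f * p) ⊗ₜ[ℂ] x} ∪
     {z | ∃ α ∈ D.simpleRoots,
        ∃ x ∈ wtSpace g D.H α, ∃ p : Polynomial ℂ, z = (X * f * p) ⊗ₜ[ℂ] x} ∪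
     {z | ∃ α ∈ D.P, α ≠ θ ∧
        ∃ x ∈ wtSpace g D.H (-α), ∃ p : Polynomial ℂ, z = (X * f * p) ⊗ₜ[ℂ] x} ∪
     {z | ∃ x ∈ wtSpace g D.H (-θ), ∃ p : Polynomial ℂ, z = (X ^ 2 * f * p) ⊗ₜ[ℂ] x} ∪
     {z | ∃ x ∈ D.H, ∃ p : Polynomial ℂ, z = (X * f * p) ⊗ₜ[ℂ] x})

/-- The subspace of the current algebra corresponding to
`ñ₊ = (g ⊗ tℂ[t]) ⊕ (n₊ ⊗ 1)`. -/
def ntModel (D : TriangularData g) : Submodule ℂ (Polynomial ℂ ⊗[ℂ] g) :=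
  Submodule.span ℂ
    ({z | ∃ (k : ℕ) (x : g), 1 ≤ k ∧ z = (X ^ k : Polynomial ℂ) ⊗ₜ[ℂ] x} ∪
     {z | ∃ x ∈ D.nPos, z = (1 : Polynomial ℂ) ⊗ₜ[ℂ] x})

/-- A realization of the Lie algebra `ñ₊`: a Lie algebra `nt` together with an
injective morphism to the current algebra with range `(g ⊗ tℂ[t]) ⊕ (n₊ ⊗ 1)`. -/
structure NtAlg (D : TriangularData g) (nt : Type) [LieRing nt] [LieAlgebra ℂ nt] where
  ι : nt →ₗ⁅ℂ⁆ Polynomial ℂ ⊗[ℂ] g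
  inj : Function.Injective ι
  range_eq : LinearMap.range (ι.toLinearMap) = ntModel g D

/-- Evaluation of the current algebra at a point `a ∈ ℂ`: `x ⊗ p(t) ↦ p(a) • x`. -/
def ev (a : ℂ) : (Polynomial ℂ ⊗[ℂ] g) →ₗ[ℂ] g :=
  (TensorProduct.lid ℂ g).toLinearMap ∘ₗ
    (TensorProduct.map (Polynomial.aeval a).toLinearMap LinearMap.id)

/-- The canonical embedding of the current algebra `g ⊗ ℂ[t]` into the model
`ℤ →₀ g` of the loop algebra `g ⊗ ℂ[t,t⁻¹]` (sending `x ⊗ tᵏ` to `single k x`). -/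
def toLoop : (Polynomial ℂ ⊗[ℂ] g) →ₗ[ℂ] (ℤ →₀ g) :=
  (Finsupp.lmapDomain g ℂ (Nat.cast : ℕ → ℤ)) ∘ₗ
    (TensorProduct.finsuppScalarLeft ℂ g ℕ).toLinearMap ∘ₗ
    (TensorProduct.congr ((Polynomial.toFinsuppIsoAlg ℂ).toLinearEquiv.trans
      (AddMonoidAlgebra.coeffLinearEquiv ℂ))
      (LinearEquiv.refl ℂ g)).toLinearMap

/-- A weight vector of `ñ₊` (viewed inside the current algebra): a nonzero element
`x ⊗ tᵏ` with `x` in `h` or in a root space. -/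
def IsWeightVec (D : TriangularData g) (w : Polynomial ℂ ⊗[ℂ] g) : Prop :=
  w ≠ 0 ∧ ∃ (k : ℕ) (x : g), w = (X ^ k : Polynomial ℂ) ⊗ₜ[ℂ] x ∧
    (x ∈ D.H ∨ ∃ α, IsRootOf g D.H α ∧ x ∈ wtSpace g D.H α)

/-- An element `z` of a Lie algebra `L` acts locally finitely on a module `V`. -/
def ActsLocallyFinitely (L : Type) [LieRing L] (V : Type) [AddCommGroup V] [Module ℂ V]
    [LieRingModule L V] (z : L) : Prop :=
  ∀ v : V, ∃ W : Submodule ℂ V, v ∈ W ∧ FiniteDimensional ℂ W ∧ ∀ w ∈ W, ⁅z, w⁆ ∈ W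

/-- A realization of the affine Lie algebra `ĝ = (g ⊗ ℂ[t,t⁻¹]) ⊕ ℂK` (without
derivation): a Lie algebra `gh` with a linear equivalence `e` with the model space
`(ℤ →₀ g) × ℂ` such that `e (single p x, 0) = x ⊗ tᵖ`, `e (0,1) = K` is central, and
`[x ⊗ tᵖ, y ⊗ t^q] = [x,y] ⊗ t^{p+q} + p δ_{p+q,0} κ(x,y) K`, `κ` the Killing form. -/
structure AffineAlg (gh : Type) [LieRing gh] [LieAlgebra ℂ gh] where
  e : ((ℤ →₀ g) × ℂ) ≃ₗ[ℂ] gh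
  brkt : ∀ (p q : ℤ) (x y : g),
    ⁅e (Finsupp.single p x, 0), e (Finsupp.single q y, 0)⁆ =
      e (Finsupp.single (p + q) ⁅x, y⁆,
        if p + q = 0 then (p : ℂ) * killingForm ℂ g x y else 0)
  central : ∀ z : gh, ⁅e (0, 1), z⁆ = 0

/-- A realization of the affine Kac–Moody algebra `t̃g = (g ⊗ ℂ[t,t⁻¹]) ⊕ ℂK ⊕ ℂd`:
as in `AffineAlg`, with moreover `e (0,0,1) = d` satisfying `[d, x ⊗ tᵖ] = p x ⊗ tᵖ`. -/
structure AffineAlgD (gt : Type) [LieRing gt] [LieAlgebra ℂ gt] where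
  e : ((ℤ →₀ g) × ℂ × ℂ) ≃ₗ[ℂ] gt
  brkt : ∀ (p q : ℤ) (x y : g),
    ⁅e (Finsupp.single p x, 0, 0), e (Finsupp.single q y, 0, 0)⁆ =
      e (Finsupp.single (p + q) ⁅x, y⁆,
        (if p + q = 0 then (p : ℂ) * killingForm ℂ g x y else 0), 0)
  central : ∀ z : gt, ⁅e (0, 1, 0), z⁆ = 0
  dBrkt : ∀ (p : ℤ) (x : g),
    ⁅e (0, 0, 1), e (Finsupp.single p x, 0, 0)⁆ = e (Finsupp.single p ((p : ℂ) • x), 0, 0)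

variable {g}

/-- `V` is the irreducible highest weight `g`-module with highest weight `lam`:
it is irreducible and has a highest weight vector of weight `lam`. -/
structure IsHWModule (D : TriangularData g) (lam : Module.Dual ℂ D.H) (V : Type)
    [AddCommGroup V] [Module ℂ V] [LieRingModule g V] [LieModule ℂ g V] where
  v₀ : V
  ne : v₀ ≠ 0
  hwN : ∀ x ∈ D.nPos, ⁅x, v₀⁆ = 0
  hwH : ∀ h : D.H, ⁅(h : g), v₀⁆ = lam h • v₀
  irred : IsSimpleOrder (LieSubmodule ℂ g V)

/-- `E` is the evaluation module `E(λ, a) = V₁ ⊗ ⋯ ⊗ V_m` over `ĝ`: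
`(x ⊗ tᵏ) · (v₁ ⊗ ⋯ ⊗ v_m) = Σᵢ aᵢᵏ v₁ ⊗ ⋯ ⊗ (x · vᵢ) ⊗ ⋯ ⊗ v_m`, and `K` acts by `0`. -/
structure EvalModule {gh : Type} [LieRing gh] [LieAlgebra ℂ gh] (A : AffineAlg g gh)
    {m : ℕ} (a : Fin m → ℂ) (V : Fin m → Type) [∀ i, AddCommGroup (V i)]
    [∀ i, Module ℂ (V i)] [∀ i, LieRingModule g (V i)] [∀ i, LieModule ℂ g (V i)]
    (E : Type) [AddCommGroup E] [Module ℂ E] [LieRingModule gh E] [LieModule ℂ gh E] where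
  ψ : E ≃ₗ[ℂ] PiTensorProduct ℂ V
  act : ∀ (k : ℤ) (x : g) (v : ∀ i, V i),
    ⁅A.e (Finsupp.single k x, 0), ψ.symm (PiTensorProduct.tprod ℂ v)⁆ =
      ∑ i, (a i) ^ k • ψ.symm (PiTensorProduct.tprod ℂ (Function.update v i ⁅x, v i⁆))
  kAct : ∀ w : E, ⁅A.e (0, 1), w⁆ = 0

/-- `V` is the `t̃g`-module `M[d] = Ind_{ĝ}^{t̃g} M` induced from a `ĝ`-module `M`.
As a vector space `M[d] = ℂ[d] ⊗ M` (modelled by `ℕ →₀ M`, `single n v = dⁿ ⊗ v`);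
`d` shifts the degree and `ĝ` acts on `d⁰ ⊗ M` as on `M`.  These data determine the
`t̃g`-module structure uniquely. -/
structure IndModule {gh gt : Type} [LieRing gh] [LieAlgebra ℂ gh] [LieRing gt]
    [LieAlgebra ℂ gt] (T : AffineAlgD g gt) (A : AffineAlg g gh)
    (M : Type) [AddCommGroup M] [Module ℂ M] [LieRingModule gh M]
    (V : Type) [AddCommGroup V] [Module ℂ V] [LieRingModule gt V] where
  φ : (ℕ →₀ M) ≃ₗ[ℂ] V
  dAct : ∀ (n : ℕ) (v : M),
    ⁅T.e (0, 0, 1), φ (Finsupp.single n v)⁆ = φ (Finsupp.single (n + 1) v)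
  rest : ∀ (u : (ℤ →₀ g) × ℂ) (v : M),
    ⁅T.e (u.1, u.2, 0), φ (Finsupp.single 0 v)⁆ = φ (Finsupp.single 0 ⁅A.e u, v⁆)

/-- `S` is the `ñ₊`-module `S(η, λ, a) = ℂ v_η ⊗ L(λ₁) ⊗ ⋯ ⊗ L(λ_m)`:
`(x ⊗ p(t)) · (v₁ ⊗ ⋯ ⊗ v_m) = η(x ⊗ p(t)) (v₁ ⊗ ⋯ ⊗ v_m) + Σᵢ p(aᵢ) v₁ ⊗ ⋯ ⊗ (x vᵢ) ⊗ ⋯ ⊗ v_m`. -/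
structure SModule {nt : Type} [LieRing nt] [LieAlgebra ℂ nt] {D : TriangularData g}
    (NT : NtAlg g D nt) (η : nt →ₗ⁅ℂ⁆ ℂ) {m : ℕ} (a : Fin m → ℂ)
    (V : Fin m → Type) [∀ i, AddCommGroup (V i)] [∀ i, Module ℂ (V i)]
    [∀ i, LieRingModule g (V i)]
    (S : Type) [AddCommGroup S] [Module ℂ S] [LieRingModule nt S] where
  ψ : S ≃ₗ[ℂ] PiTensorProduct ℂ V
  act : ∀ (z : nt) (v : ∀ i, V i),
    ⁅z, ψ.symm (PiTensorProduct.tprod ℂ v)⁆ = η z • ψ.symm (PiTensorProduct.tprod ℂ v) +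
      ∑ i, ψ.symm (PiTensorProduct.tprod ℂ (Function.update v i ⁅ev g (a i) (NT.ι z), v i⁆))

/-- `V` is the irreducible highest weight `ĝ`-module with highest weight
`γ ∈ (h ⊕ ℂK)*`. -/
structure HWModuleAff {gh : Type} [LieRing gh] [LieAlgebra ℂ gh] (A : AffineAlg g gh)
    (D : TriangularData g) (γ : Module.Dual ℂ (↥D.H × ℂ)) (V : Type)
    [AddCommGroup V] [Module ℂ V] [LieRingModule gh V] [LieModule ℂ gh V] where
  v₀ : V
  ne : v₀ ≠ 0
  hwLoop : ∀ k : ℕ, 1 ≤ k → ∀ x : g, ⁅A.e (Finsupp.single (k : ℤ) x, 0), v₀⁆ = 0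
  hwN : ∀ x ∈ D.nPos, ⁅A.e (Finsupp.single 0 x, 0), v₀⁆ = 0
  hwH : ∀ (h : D.H) (c : ℂ), ⁅A.e (Finsupp.single 0 (h : g), c), v₀⁆ = γ (h, c) • v₀
  irred : IsSimpleOrder (LieSubmodule ℂ gh V)

/-- `W` is an irreducible Whittaker `ĝ`-module of type `η : ñ₊ → ℂ`. -/
structure WhittakerAff {gh : Type} [LieRing gh] [LieAlgebra ℂ gh] (A : AffineAlg g gh)
    {D : TriangularData g} {nt : Type} [LieRing nt] [LieAlgebra ℂ nt] (NT : NtAlg g D nt)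
    (η : nt →ₗ⁅ℂ⁆ ℂ) (W : Type)
    [AddCommGroup W] [Module ℂ W] [LieRingModule gh W] [LieModule ℂ gh W] where
  v₀ : W
  ne : v₀ ≠ 0
  wh : ∀ z : nt, ⁅A.e (toLoop g (NT.ι z), 0), v₀⁆ = η z • v₀
  irred : IsSimpleOrder (LieSubmodule ℂ gh W)

/-- `MS` is the induced `ĝ`-module `Ind_{ñ₊}^{ĝ} S`, characterized by its universal
property. -/
structure IndFromNt {gh : Type} [LieRing gh] [LieAlgebra ℂ gh] (A : AffineAlg g gh)
    {D : TriangularData g} {nt : Type} [LieRing nt] [LieAlgebra ℂ nt] (NT : NtAlg g D nt)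
    (S : Type) [AddCommGroup S] [Module ℂ S] [LieRingModule nt S]
    (MS : Type) [AddCommGroup MS] [Module ℂ MS] [LieRingModule gh MS]
    [LieModule ℂ gh MS] where
  ι₀ : S →ₗ[ℂ] MS
  compat : ∀ (z : nt) (s : S), ⁅A.e (toLoop g (NT.ι z), 0), ι₀ s⁆ = ι₀ ⁅z, s⁆
  univ : ∀ (W : Type) [AddCommGroup W] [Module ℂ W] [LieRingModule gh W]
    [LieModule ℂ gh W] (f : S →ₗ[ℂ] W),
    (∀ (z : nt) (s : S), ⁅A.e (toLoop g (NT.ι z), 0), f s⁆ = f ⁅z, s⁆) →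
    ∃! F : MS →ₗ⁅ℂ,gh⁆ W, F.toLinearMap ∘ₗ ι₀ = f

/-- `M0` is the universal Whittaker module `M(η) = Ind_{ñ₊}^{ĝ} ℂ_η`, characterized
by its universal property. -/
structure UnivWhittaker {gh : Type} [LieRing gh] [LieAlgebra ℂ gh] (A : AffineAlg g gh)
    {D : TriangularData g} {nt : Type} [LieRing nt] [LieAlgebra ℂ nt] (NT : NtAlg g D nt)
    (η : nt →ₗ⁅ℂ⁆ ℂ) (M0 : Type) [AddCommGroup M0] [Module ℂ M0] [LieRingModule gh M0]
    [LieModule ℂ gh M0] where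
  u₀ : M0
  rel : ∀ z : nt, ⁅A.e (toLoop g (NT.ι z), 0), u₀⁆ = η z • u₀
  univ : ∀ (W : Type) [AddCommGroup W] [Module ℂ W] [LieRingModule gh W]
    [LieModule ℂ gh W] (w : W),
    (∀ z : nt, ⁅A.e (toLoop g (NT.ι z), 0), w⁆ = η z • w) →
    ∃! F : M0 →ₗ⁅ℂ,gh⁆ W, F u₀ = w

variable (g)

/-- A bundled Lie module over a complex Lie algebra `L`. -/
structure LieModOf (L : Type) [LieRing L] [LieAlgebra ℂ L] : Type 1 where
  carrier : Type
  [ac : AddCommGroup carrier]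
  [mo : Module ℂ carrier]
  [lrm : LieRingModule L carrier]
  [lm : LieModule ℂ L carrier]

attribute [instance] LieModOf.ac LieModOf.mo LieModOf.lrm LieModOf.lm

end AffinePaper

/-!
Write `J = I(t-a)`, an ideal of `ñ₊`. Since `[I(p), I(q)] ⊆ I(pq)`, the derived series of `J`
falls into `I((t-a)ⁿ)`, which kills `S`; so `J` acts on `S` through a solvable Lie algebra, and
Lie's theorem gives a weight space of `J` in `S`. By the invariance lemma this weight space is an
`ñ₊`-submodule, hence all of `S`: `J` acts by scalars, so `[ñ₊, J]` acts by zero. As `t²` and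
`(t-a)ⁿ` are coprime and `g = [g, g]`, we have `J ⊆ [ñ₊, J] + I((t-a)ⁿ)`, so `J` kills `S`.
Conversely, evaluation at `a ≠ 0` identifies `ñ₊ / J` with the simple algebra `g`, so the
annihilator, an ideal containing `J`, is either `J` or everything, and `S` is nontrivial.
-/

lemma LieAlgebra.IsSimple.lie_top_top_eq_top {R L : Type*} [CommRing R] [LieRing L] [LieAlgebra R L]
    [LieAlgebra.IsSimple R L] : ⁅(⊤ : LieIdeal R L), (⊤ : LieIdeal R L)⁆ = ⊤ :=
  (eq_bot_or_eq_top (R := R) _).resolve_left fun h => non_abelian R (L := L) ⟨fun x y => by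
    have := LieSubmodule.lie_mem_lie (LieSubmodule.mem_top (R := R) x)
      (LieSubmodule.mem_top (R := R) (L := L) y)
    simpa [h] using this⟩

namespace LieModule

open LieAlgebra

attribute [local instance 100] LieRing.ofAssociativeRing

variable {k L V : Type*} [Field k] [LieRing L] [LieAlgebra k L] [AddCommGroup V] [Module k V]
  [LieRingModule L V] [LieModule k L V]

lemma isSolvable_range_toEnd_of_derivedSeries_le_ker {m : ℕ}
    (h : derivedSeries k L m ≤ LieModule.ker k L V) : IsSolvable (toEnd k L V).range := by
  refine IsSolvable.mk (R := k) (k := m) ?_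
  rw [← LieIdeal.derivedSeries_map_eq m (toEnd k L V).surjective_rangeRestrict,
    LieIdeal.map_eq_bot_iff]
  exact fun x hx => Subtype.ext (LieHom.mem_ker.mp (h hx))

lemma lie_lie_eq_zero_of_forall_lie_eq_smul (x : L) {w : L} {c : k}
    (hw : ∀ v : V, ⁅w, v⁆ = c • v) (v : V) : ⁅⁅x, w⁆, v⁆ = 0 := by
  rw [lie_lie, hw, lie_smul, hw, sub_self]

variable [CharZero k] [Module.Finite k V] [IsTriangularizable k L V]

lemma exists_nontrivial_weightSpace_of_derivedSeries_le_ker [Nontrivial V] {m : ℕ}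
    (h : derivedSeries k L m ≤ LieModule.ker k L V) :
    ∃ χ : Module.Dual k L, Nontrivial (weightSpace V χ) := by
  have := isSolvable_range_toEnd_of_derivedSeries_le_ker h
  obtain ⟨χ, hχ⟩ := exists_nontrivial_weightSpace_of_isSolvable k (toEnd k L V).range V
  obtain ⟨⟨v, hv⟩, hv0⟩ := exists_ne (0 : weightSpace V χ)
  refine ⟨χ.comp (toEnd k L V).rangeRestrict.toLinearMap, nontrivial_of_ne ⟨v, ?_⟩ 0 ?_⟩
  · rw [mem_weightSpace] at hv ⊢
    exact fun x => hv ((toEnd k L V).rangeRestrict x)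
  · simpa using hv0

lemma exists_forall_lie_eq_smul_of_derivedSeriesOfIdeal_le_ker
    (hV : IsSimpleOrder (LieSubmodule k L V)) (A : LieIdeal k L) {m : ℕ}
    (h : derivedSeriesOfIdeal k L m A ≤ LieModule.ker k L V) :
    ∃ χ : Module.Dual k A, ∀ a : A, ∀ v : V, ⁅(a : L), v⁆ = χ a • v := by
  have : Nontrivial V := (LieSubmodule.nontrivial_iff k L V).mp inferInstance
  have hA : derivedSeries k A m ≤ LieModule.ker k A V := by
    intro x hx
    rw [LieIdeal.derivedSeries_eq_derivedSeriesOfIdeal_comap] at hx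
    exact (LieModule.mem_ker k A V x).mpr ((LieModule.mem_ker k L V (x : L)).mp (h hx))
  obtain ⟨χ, hχ⟩ := exists_nontrivial_weightSpace_of_derivedSeries_le_ker hA
  have : Nontrivial (weightSpaceOfIsLieTower k V χ : LieSubmodule k L V) := hχ
  have hW : weightSpaceOfIsLieTower k V χ = (⊤ : LieSubmodule k L V) :=
    (hV.eq_bot_or_eq_top _).resolve_left ((LieSubmodule.nontrivial_iff_ne_bot k L V).mp this)
  refine ⟨χ, fun a v => ?_⟩
  have hv : v ∈ weightSpaceOfIsLieTower k V χ := hW ▸ LieSubmodule.mem_top v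
  exact (mem_weightSpace _ _).mp hv a

theorem le_ker_of_le_lie_top_sup (hV : IsSimpleOrder (LieSubmodule k L V)) {A K : LieIdeal k L}
    (hK : K ≤ LieModule.ker k L V) (hA : A ≤ ⁅(⊤ : LieIdeal k L), A⁆ ⊔ K) {m : ℕ}
    (h : derivedSeriesOfIdeal k L m A ≤ LieModule.ker k L V) : A ≤ LieModule.ker k L V := by
  obtain ⟨χ, hχ⟩ := exists_forall_lie_eq_smul_of_derivedSeriesOfIdeal_le_ker hV A h
  refine hA.trans (sup_le ?_ hK)
  rw [LieSubmodule.lie_le_iff]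
  exact fun x _ a ha => (LieModule.mem_ker k L V _).mpr
    (lie_lie_eq_zero_of_forall_lie_eq_smul x (hχ ⟨a, ha⟩))

end LieModule

lemma LieIdeal.le_ker_or_eq_top_of_ker_le {R L L' : Type*} [CommRing R] [LieRing L]
    [LieAlgebra R L] [LieRing L'] [LieAlgebra R L'] [LieAlgebra.IsSimple R L']
    {f : L →ₗ⁅R⁆ L'} (hf : Function.Surjective f) {I : LieIdeal R L} (hI : f.ker ≤ I) :
    I ≤ f.ker ∨ I = ⊤ := by
  rcases LieAlgebra.IsSimple.eq_bot_or_eq_top (I.map f) with h | h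
  · exact Or.inl (LieIdeal.map_eq_bot_iff.mp h)
  · refine Or.inr (eq_top_iff.mpr fun y _ => ?_)
    obtain ⟨x, hx⟩ := LieIdeal.mem_map_of_surjective hf (h ▸ LieSubmodule.mem_top (f y))
    have hyx : y - x ∈ f.ker := by rw [LieHom.mem_ker, map_sub, hx, sub_self]
    simpa using add_mem x.2 (hI hyx)

namespace AffinePaper

section CurrentAlgebra

variable {g : Type} [LieRing g] [LieAlgebra ℂ g] {D : TriangularData g}

lemma tmul_mem_idealI_of_mem_nPos {x : g} (hx : x ∈ D.nPos) (f p : ℂ[X]) :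
    (f * p) ⊗ₜ[ℂ] x ∈ idealI g D f :=
  Submodule.subset_span (Or.inl ⟨x, hx, p, rfl⟩)

lemma X_mul_tmul_mem_idealI (x : g) (f p : ℂ[X]) :
    (X * f * p) ⊗ₜ[ℂ] x ∈ idealI g D f := by
  have hx : x ∈ D.nNeg.toSubmodule ⊔ D.H.toSubmodule ⊔ D.nPos.toSubmodule := by
    rw [D.triang]; exact Submodule.mem_top
  obtain ⟨y, hy, z, hz, rfl⟩ := Submodule.mem_sup.mp hx
  rw [sup_comm] at hy
  rw [TensorProduct.tmul_add]
  refine add_mem (Submodule.subset_span (Or.inr ⟨y, hy, p, rfl⟩)) ?_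
  have := tmul_mem_idealI_of_mem_nPos hz f (X * p)
  rwa [mul_left_comm, ← mul_assoc] at this

lemma X_mul_tmul_mem_ntModel (p : ℂ[X]) (x : g) : (X * p) ⊗ₜ[ℂ] x ∈ ntModel g D := by
  induction p using Polynomial.induction_on' with
  | add p q hp hq => rw [mul_add, TensorProduct.add_tmul]; exact add_mem hp hq
  | monomial i c =>
    rw [← C_mul_X_pow_eq_monomial, mul_left_comm, ← pow_succ', ← smul_eq_C_mul,
      ← TensorProduct.smul_tmul']
    exact Submodule.smul_mem _ c (Submodule.subset_span (Or.inl ⟨i + 1, x, by omega, rfl⟩))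

lemma tmul_mem_ntModel_of_mem_nPos (p : ℂ[X]) {x : g} (hx : x ∈ D.nPos) :
    p ⊗ₜ[ℂ] x ∈ ntModel g D := by
  rw [← X_mul_divX_add p, TensorProduct.add_tmul, ← mul_one (C _), ← smul_eq_C_mul,
    ← TensorProduct.smul_tmul']
  exact add_mem (X_mul_tmul_mem_ntModel _ x)
    (Submodule.smul_mem _ _ (Submodule.subset_span (Or.inr ⟨x, hx, rfl⟩)))

lemma smul_mem_ntModel (p : ℂ[X]) {u : ℂ[X] ⊗[ℂ] g} (hu : u ∈ ntModel g D) :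
    p • u ∈ ntModel g D := by
  induction hu using Submodule.span_induction with
  | mem u hu =>
    rcases hu with ⟨k, x, hk, rfl⟩ | ⟨x, hx, rfl⟩
    · obtain ⟨k, rfl⟩ := Nat.exists_eq_add_of_le' hk
      rw [TensorProduct.smul_tmul', smul_eq_mul, pow_succ', mul_left_comm]
      exact X_mul_tmul_mem_ntModel _ x
    · rw [TensorProduct.smul_tmul', smul_eq_mul, mul_one]
      exact tmul_mem_ntModel_of_mem_nPos p hx
  | zero => rw [smul_zero]; exact zero_mem _
  | add u w _ _ hu hw => rw [smul_add]; exact add_mem hu hw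
  | smul c u _ hu => rw [smul_comm]; exact Submodule.smul_mem _ c hu

lemma mem_idealI_iff {f : ℂ[X]} {w : ℂ[X] ⊗[ℂ] g} :
    w ∈ idealI g D f ↔ ∃ u ∈ ntModel g D, w = f • u := by
  constructor
  · intro hw
    induction hw using Submodule.span_induction with
    | mem w hw =>
      rcases hw with ⟨x, hx, p, rfl⟩ | ⟨x, -, p, rfl⟩
      · exact ⟨p ⊗ₜ x, tmul_mem_ntModel_of_mem_nPos p hx, by
          rw [TensorProduct.smul_tmul', smul_eq_mul]⟩
      · exact ⟨(X * p) ⊗ₜ x, X_mul_tmul_mem_ntModel p x, by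
          rw [TensorProduct.smul_tmul', smul_eq_mul, mul_left_comm, mul_assoc]⟩
    | zero => exact ⟨0, zero_mem _, (smul_zero f).symm⟩
    | add w w' _ _ hw hw' =>
      obtain ⟨u, hu, rfl⟩ := hw
      obtain ⟨u', hu', rfl⟩ := hw'
      exact ⟨u + u', add_mem hu hu', (smul_add f u u').symm⟩
    | smul c w _ hw =>
      obtain ⟨u, hu, rfl⟩ := hw
      exact ⟨c • u, Submodule.smul_mem _ c hu, smul_comm c f u⟩
  · rintro ⟨u, hu, rfl⟩
    induction hu using Submodule.span_induction with
    | mem u hu =>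
      rcases hu with ⟨k, x, hk, rfl⟩ | ⟨x, hx, rfl⟩
      · obtain ⟨k, rfl⟩ := Nat.exists_eq_add_of_le' hk
        rw [TensorProduct.smul_tmul', smul_eq_mul, pow_succ', mul_left_comm, ← mul_assoc]
        exact X_mul_tmul_mem_idealI x f _
      · simpa [TensorProduct.smul_tmul'] using tmul_mem_idealI_of_mem_nPos hx f 1
    | zero => rw [smul_zero]; exact zero_mem _
    | add u w _ _ hu hw => rw [smul_add]; exact add_mem hu hw
    | smul c u _ hu => rw [smul_comm]; exact Submodule.smul_mem _ c hu

lemma ev_tmul (a : ℂ) (p : ℂ[X]) (x : g) : ev g a (p ⊗ₜ[ℂ] x) = p.eval a • x := by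
  simp [ev, Polynomial.aeval_def]

lemma ev_smul (a : ℂ) (p : ℂ[X]) (w : ℂ[X] ⊗[ℂ] g) :
    ev g a (p • w) = p.eval a • ev g a w := by
  induction w using TensorProduct.induction_on with
  | zero => simp
  | tmul q x =>
    rw [TensorProduct.smul_tmul', smul_eq_mul, ev_tmul, ev_tmul, eval_mul, mul_smul]
  | add u w hu hw => rw [smul_add, map_add, map_add, hu, hw, smul_add]

variable (g) in
def evLie (a : ℂ) : (ℂ[X] ⊗[ℂ] g) →ₗ⁅ℂ⁆ g :=
  { ev g a with
    map_lie' := fun {u w} => by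
      induction u using TensorProduct.induction_on with
      | zero => simp
      | add u u' hu hu' => simp_all [add_lie]
      | tmul p x =>
        induction w using TensorProduct.induction_on with
        | zero => simp
        | add w w' hw hw' => simp_all [lie_add]
        | tmul q y =>
          simp only [AddHom.toFun_eq_coe, LinearMap.coe_toAddHom]
          rw [LieAlgebra.ExtendScalars.bracket_tmul, ev_tmul, ev_tmul, ev_tmul, eval_mul,
            smul_lie, lie_smul, mul_smul] }

lemma evLie_apply (a : ℂ) (w : ℂ[X] ⊗[ℂ] g) : evLie g a w = ev g a w := rfl

lemma mem_idealI_X_sub_C_of_ev_eq_zero {a : ℂ} (ha : a ≠ 0) {w : ℂ[X] ⊗[ℂ] g}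
    (hw : w ∈ ntModel g D) (hev : ev g a w = 0) : w ∈ idealI g D (X - C a) := by
  -- modulo `I(t-a)`, every `w ∈ ñ₊` is congruent to `t ⊗ a⁻¹ ev_a(w)`
  let r := LinearMap.id - TensorProduct.mk ℂ ℂ[X] g X ∘ₗ (a⁻¹ • ev g a)
  suffices ntModel g D ≤ (idealI g D (X - C a)).comap r by simpa [r, hev] using this hw
  refine Submodule.span_le.mpr ?_
  rintro _ (⟨k, x, hk, rfl⟩ | ⟨x, hx, rfl⟩)
  · obtain ⟨k, rfl⟩ := Nat.exists_eq_add_of_le' hk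
    obtain ⟨q, hq⟩ : X - C a ∣ X ^ k - C (a ^ k) := by
      simpa using X_sub_C_dvd_sub_C_eval (a := a) (p := (X ^ k : ℂ[X]))
    refine mem_idealI_iff.mpr ⟨(X * q) ⊗ₜ x, X_mul_tmul_mem_ntModel q x, ?_⟩
    simp only [r, LinearMap.sub_apply, LinearMap.id_apply, LinearMap.comp_apply,
      LinearMap.smul_apply, TensorProduct.mk_apply, ev_tmul, eval_pow, eval_X, smul_smul]
    rw [pow_succ' a, inv_mul_cancel_left₀ ha, TensorProduct.smul_tmul', smul_eq_mul,
      ← TensorProduct.smul_tmul, smul_eq_C_mul, ← TensorProduct.sub_tmul]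
    congr 1
    linear_combination (X : ℂ[X]) * hq
  · refine mem_idealI_iff.mpr ⟨C (-a⁻¹) ⊗ₜ x, tmul_mem_ntModel_of_mem_nPos _ hx, ?_⟩
    simp only [r, LinearMap.sub_apply, LinearMap.id_apply, LinearMap.comp_apply,
      LinearMap.smul_apply, TensorProduct.mk_apply, ev_tmul, eval_one, one_smul]
    rw [TensorProduct.smul_tmul', smul_eq_mul, ← TensorProduct.smul_tmul, smul_eq_C_mul,
      ← TensorProduct.sub_tmul]
    have hCa : C a * C a⁻¹ = 1 := by rw [← C_mul, mul_inv_cancel₀ ha, C_1]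
    congr 1
    rw [C_neg]
    linear_combination (-1 : ℂ[X]) * hCa

end CurrentAlgebra

namespace NtAlg

variable {g : Type} [LieRing g] [LieAlgebra ℂ g] {D : TriangularData g}
  {nt : Type} [LieRing nt] [LieAlgebra ℂ nt] (NT : NtAlg g D nt)

lemma ι_mem_ntModel (z : nt) : NT.ι z ∈ ntModel g D := by
  rw [← NT.range_eq]; exact LinearMap.mem_range_self _ z

lemma exists_ι_eq {w : ℂ[X] ⊗[ℂ] g} (hw : w ∈ ntModel g D) : ∃ z, NT.ι z = w := by
  rw [← NT.range_eq] at hw; exact hw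

lemma ι_mem_idealI_iff {f : ℂ[X]} {z : nt} :
    NT.ι z ∈ AffinePaper.idealI g D f ↔ ∃ w : nt, NT.ι z = f • NT.ι w := by
  rw [mem_idealI_iff]
  constructor
  · rintro ⟨u, hu, h⟩
    obtain ⟨w, rfl⟩ := NT.exists_ι_eq hu
    exact ⟨w, h⟩
  · rintro ⟨w, h⟩
    exact ⟨_, NT.ι_mem_ntModel w, h⟩

def idealI (f : ℂ[X]) : LieIdeal ℂ nt :=
  { (AffinePaper.idealI g D f).comap NT.ι.toLinearMap with
    lie_mem := fun {u z} hz => by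
      obtain ⟨w, hw⟩ := NT.ι_mem_idealI_iff.mp hz
      exact NT.ι_mem_idealI_iff.mpr ⟨⁅u, w⁆, by
        rw [LieHom.map_lie, hw, lie_smul (R := ℂ[X]) f (NT.ι u) (NT.ι w), LieHom.map_lie]⟩ }

lemma mem_idealI {f : ℂ[X]} {z : nt} :
    z ∈ NT.idealI f ↔ NT.ι z ∈ AffinePaper.idealI g D f :=
  Iff.rfl

lemma lie_idealI_le (q r : ℂ[X]) : ⁅NT.idealI q, NT.idealI r⁆ ≤ NT.idealI (q * r) := by
  rw [LieSubmodule.lie_le_iff]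
  intro z hz z' hz'
  obtain ⟨w, hw⟩ := NT.ι_mem_idealI_iff.mp hz
  obtain ⟨w', hw'⟩ := NT.ι_mem_idealI_iff.mp hz'
  exact NT.ι_mem_idealI_iff.mpr ⟨⁅w, w'⁆, by
    rw [LieHom.map_lie, hw, hw', smul_lie (R := ℂ[X]) q (NT.ι w),
      lie_smul (R := ℂ[X]) r (NT.ι w) (NT.ι w'), smul_smul, LieHom.map_lie]⟩

lemma idealI_mul_le (q r : ℂ[X]) : NT.idealI (q * r) ≤ NT.idealI q := by
  intro z hz
  obtain ⟨w, hw⟩ := NT.ι_mem_idealI_iff.mp hz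
  obtain ⟨w', hw'⟩ := NT.exists_ι_eq (smul_mem_ntModel r (NT.ι_mem_ntModel w))
  exact NT.ι_mem_idealI_iff.mpr ⟨w', by rw [hw, hw', mul_smul]⟩

lemma derivedSeriesOfIdeal_idealI_le (f : ℂ[X]) (k : ℕ) :
    LieAlgebra.derivedSeriesOfIdeal ℂ nt k (NT.idealI f) ≤ NT.idealI (f ^ 2 ^ k) := by
  induction k with
  | zero => simp
  | succ k ih =>
    rw [LieAlgebra.derivedSeriesOfIdeal_succ, pow_succ, pow_mul, sq]
    exact (LieSubmodule.mono_lie ih ih).trans (NT.lie_idealI_le _ _)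

lemma ker_evLie_comp_ι {a : ℂ} (ha : a ≠ 0) :
    ((evLie g a).comp NT.ι).ker = NT.idealI (X - C a) := by
  ext z
  rw [LieHom.mem_ker, LieHom.comp_apply, evLie_apply, mem_idealI]
  constructor
  · exact mem_idealI_X_sub_C_of_ev_eq_zero ha (NT.ι_mem_ntModel z)
  · intro hz
    obtain ⟨w, hw⟩ := NT.ι_mem_idealI_iff.mp hz
    rw [hw, ev_smul, eval_sub, eval_X, eval_C, sub_self, zero_smul]

lemma evLie_comp_ι_surjective {a : ℂ} (ha : a ≠ 0) :
    Function.Surjective ((evLie g a).comp NT.ι) := by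
  intro x
  obtain ⟨z, hz⟩ :=
    NT.exists_ι_eq (Submodule.smul_mem _ a⁻¹ (X_mul_tmul_mem_ntModel (D := D) 1 x))
  refine ⟨z, ?_⟩
  rw [LieHom.comp_apply, evLie_apply, hz, map_smul, ev_tmul, mul_one, eval_X, smul_smul,
    inv_mul_cancel₀ ha, one_smul]

variable [LieAlgebra.IsSimple ℂ g]

lemma X_sq_mul_smul_mem_map_lie_top (f : ℂ[X]) (v : ℂ[X] ⊗[ℂ] g) :
    (X ^ 2 * f) • v ∈ (⁅(⊤ : LieIdeal ℂ nt), NT.idealI f⁆ : LieIdeal ℂ nt).toSubmodule.map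
      NT.ι.toLinearMap := by
  set M := (⁅(⊤ : LieIdeal ℂ nt), NT.idealI f⁆ : LieIdeal ℂ nt).toSubmodule.map
    NT.ι.toLinearMap
  induction v using TensorProduct.induction_on with
  | zero => rw [smul_zero]; exact zero_mem M
  | add v v' hv hv' => rw [smul_add]; exact add_mem hv hv'
  | tmul p x =>
    rw [TensorProduct.smul_tmul', smul_eq_mul]
    suffices ⊤ ≤ M.comap (TensorProduct.mk ℂ ℂ[X] g (X ^ 2 * f * p)) from
      this Submodule.mem_top
    rw [← LieSubmodule.top_toSubmodule (R := ℂ) (L := g),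
      ← LieAlgebra.IsSimple.lie_top_top_eq_top, LieSubmodule.lieIdeal_oper_eq_linear_span',
      Submodule.span_le]
    rintro _ ⟨u, -, v, -, rfl⟩
    obtain ⟨y, hy⟩ := NT.exists_ι_eq (X_mul_tmul_mem_ntModel 1 u)
    obtain ⟨w, hw⟩ := NT.exists_ι_eq (X_mul_tmul_mem_ntModel p v)
    obtain ⟨z, hz⟩ := NT.exists_ι_eq (smul_mem_ntModel f (NT.ι_mem_ntModel w))
    refine ⟨⁅y, z⁆, LieSubmodule.lie_mem_lie (LieSubmodule.mem_top y)
      (NT.ι_mem_idealI_iff.mpr ⟨w, hz⟩), ?_⟩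
    rw [LieHom.coe_toLinearMap, LieHom.map_lie, hy, hz, hw, TensorProduct.smul_tmul', smul_eq_mul,
      LieAlgebra.ExtendScalars.bracket_tmul, TensorProduct.mk_apply]
    congr 1
    ring

lemma idealI_le_lie_top_sup {a : ℂ} (ha : a ≠ 0) (n : ℕ) :
    NT.idealI (X - C a) ≤
      ⁅(⊤ : LieIdeal ℂ nt), NT.idealI (X - C a)⁆ ⊔ NT.idealI ((X - C a) ^ n) := by
  intro z hz
  obtain ⟨w, hw⟩ := NT.ι_mem_idealI_iff.mp hz
  obtain ⟨A, B, hAB⟩ : IsCoprime (X ^ 2 : ℂ[X]) ((X - C a) ^ n) := by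
    refine IsCoprime.pow ?_
    simpa using isCoprime_X_sub_C_of_isUnit_sub (a := (0 : ℂ)) (b := a) (by simpa using ha)
  obtain ⟨y, hy, hyι⟩ := NT.X_sq_mul_smul_mem_map_lie_top (X - C a) (A • NT.ι w)
  obtain ⟨w', hw'⟩ := NT.exists_ι_eq (smul_mem_ntModel (B * (X - C a)) (NT.ι_mem_ntModel w))
  have hzy : z - y ∈ NT.idealI ((X - C a) ^ n) := NT.ι_mem_idealI_iff.mpr ⟨w', by
    rw [map_sub, show NT.ι y = _ from hyι, hw', hw, smul_smul, smul_smul,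
      ← sub_smul (X - C a) (X ^ 2 * (X - C a) * A) (NT.ι w)]
    congr 1
    linear_combination -(X - C a) * hAB⟩
  exact (LieSubmodule.mem_sup _ _ z).mpr ⟨y, hy, z - y, hzy, add_sub_cancel y z⟩

end NtAlg

theorem statement7_general (g : Type) [LieRing g] [LieAlgebra ℂ g]
    [LieAlgebra.IsSimple ℂ g] (D : TriangularData g)
    (nt : Type) [LieRing nt] [LieAlgebra ℂ nt] (NT : NtAlg g D nt)
    (a : ℂ) (ha : a ≠ 0) (n : ℕ)
    (S : Type) [AddCommGroup S] [Module ℂ S] [LieRingModule nt S] [LieModule ℂ nt S]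
    [FiniteDimensional ℂ S]
    (hnontriv : ∃ (z : nt) (s : S), ⁅z, s⁆ ≠ 0)
    (hirr : IsSimpleOrder (LieSubmodule ℂ nt S))
    (hann : ∀ z : nt, NT.ι z ∈ idealI g D ((X - C a) ^ n) → ∀ s : S, ⁅z, s⁆ = 0) :
    ∀ z : nt, (∀ s : S, ⁅z, s⁆ = 0) ↔ NT.ι z ∈ idealI g D (X - C a) := by
  have hpow : NT.idealI ((X - C a) ^ n) ≤ LieModule.ker ℂ nt S :=
    fun z hz => (LieModule.mem_ker ℂ nt S z).mpr (hann z hz)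
  have hsolv : LieAlgebra.derivedSeriesOfIdeal ℂ nt n (NT.idealI (X - C a)) ≤
      LieModule.ker ℂ nt S := by
    refine (NT.derivedSeriesOfIdeal_idealI_le _ n).trans (le_trans ?_ hpow)
    obtain ⟨m, hm⟩ := Nat.exists_eq_add_of_le n.lt_two_pow_self.le
    rw [hm, pow_add]
    exact NT.idealI_mul_le _ _
  have hle := LieModule.le_ker_of_le_lie_top_sup hirr hpow (NT.idealI_le_lie_top_sup ha n) hsolv
  have hne : LieModule.ker ℂ nt S ≠ ⊤ := by
    obtain ⟨z, s, hzs⟩ := hnontriv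
    exact fun h => hzs ((LieModule.mem_ker ℂ nt S z).mp (h ▸ LieSubmodule.mem_top z) s)
  rw [← NT.ker_evLie_comp_ι ha] at hle
  have hker : LieModule.ker ℂ nt S = NT.idealI (X - C a) := by
    rw [← NT.ker_evLie_comp_ι ha]
    exact le_antisymm ((LieIdeal.le_ker_or_eq_top_of_ker_le
      (NT.evLie_comp_ι_surjective ha) hle).resolve_right hne) hle
  intro z
  rw [← LieModule.mem_ker ℂ nt S z, hker]
  rfl

/-- for `a ≠ 0`, `n ≥ 1` and a nontrivial finite-dimensional irreducible
`ñ₊`-module `S` with `I((t-a)ⁿ) S = 0`, the annihilator of `S` in `ñ₊` is exactly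
`I(t-a)`. -/
theorem statement7 (g : Type) [LieRing g] [LieAlgebra ℂ g] [FiniteDimensional ℂ g]
    [LieAlgebra.IsSimple ℂ g] (D : TriangularData g)
    (nt : Type) [LieRing nt] [LieAlgebra ℂ nt] (NT : NtAlg g D nt)
    (a : ℂ) (ha : a ≠ 0) (n : ℕ) (hn : 1 ≤ n)
    (S : Type) [AddCommGroup S] [Module ℂ S] [LieRingModule nt S] [LieModule ℂ nt S]
    [FiniteDimensional ℂ S]
    (hnontriv : ∃ (z : nt) (s : S), ⁅z, s⁆ ≠ 0)
    (hirr : IsSimpleOrder (LieSubmodule ℂ nt S))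
    (hann : ∀ z : nt, NT.ι z ∈ idealI g D ((X - C a) ^ n) → ∀ s : S, ⁅z, s⁆ = 0) :
    ∀ z : nt, (∀ s : S, ⁅z, s⁆ = 0) ↔ NT.ι z ∈ idealI g D (X - C a) :=
  statement7_general g D nt NT a ha n S hnontriv hirr hann

end AffinePaper
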